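/- arXiv:2012.13774 — 3 statements merged into one kernel-verified Lean document; each statement's English description precedes it below -/
import Mathlib

section
/- Let S be a bounded measurable subset of the plane ℝ² with Lebesgue measure (area) equal to 1. Then one sixth of the integral, over all triples of points A=(x,y), B=(u,v), C=(z,ω) of S, of the squared area of the triangle ABC equals one quarter of the affine invariant 𝒜(S); formally, (1/6)·∫∫_{(x,y)∈S} ∫∫_{(u,v)∈S} ∫∫_{(z,ω)∈S} (1/4)·((x−z)(v−ω) − (y−ω)(u−z))² dx dy du dv dz dω = (1/4)·(μ₂₀(S)·μ₀₂(S) − μ₁₁(S)²). -/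
open MeasureTheory Set

/-!
The integrand depends only on differences of the three points, so after translating `S` we may
assume its centroid is the origin. Against a centred measure the integral of a quadratic polynomial
sees only its constant and quadratic coefficients. Writing `Q d = ∫ cross d C ^ 2` and
`Δ = μ₂₀ μ₀₂ - μ₁₁²`: since `cross (A - C) (B - C) = cross A B - cross (A - B) C`, integrating over
`C` gives `cross A B ^ 2 + Q (A - B)`; integrating that over `B` gives `2 Q A + 2 Δ`, and
integrating over `A` gives `6 Δ`.
-/

/-- Geometric moment `m_{p,q}(S) = ∫∫_S x^p y^q dx dy`. -/
noncomputable def geomMoment (p q : ℕ) (S : Set (ℝ × ℝ)) : ℝ :=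
  ∫ P in S, P.1 ^ p * P.2 ^ q

/-- x-coordinate of the centroid of `S`. -/
noncomputable def xc (S : Set (ℝ × ℝ)) : ℝ :=
  geomMoment 1 0 S / geomMoment 0 0 S

/-- y-coordinate of the centroid of `S`. -/
noncomputable def yc (S : Set (ℝ × ℝ)) : ℝ :=
  geomMoment 0 1 S / geomMoment 0 0 S

/-- Un-normalized central moment `M_{p,q}(S)`. -/
noncomputable def centralMoment (p q : ℕ) (S : Set (ℝ × ℝ)) : ℝ :=
  ∫ P in S, (P.1 - xc S) ^ p * (P.2 - yc S) ^ q

/-- Normalized central moment `μ_{p,q}(S) = m₀₀(S)^{-(p+q+2)/2} · M_{p,q}(S)`. -/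
noncomputable def mu (p q : ℕ) (S : Set (ℝ × ℝ)) : ℝ :=
  centralMoment p q S / geomMoment 0 0 S ^ (((p : ℝ) + (q : ℝ) + 2) / 2)

/-- The affine moment invariant `𝒜(S) = μ₂₀(S)·μ₀₂(S) − μ₁₁(S)²`. -/
noncomputable def affInv (S : Set (ℝ × ℝ)) : ℝ :=
  mu 2 0 S * mu 0 2 S - mu 1 1 S ^ 2

def cross (A B : ℝ × ℝ) : ℝ := A.1 * B.2 - A.2 * B.1

structure IsCenteredL2 (ν : Measure (ℝ × ℝ)) : Prop where
  memLp_fst : MemLp Prod.fst 2 ν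
  memLp_snd : MemLp Prod.snd 2 ν
  integral_fst : ∫ C, C.1 ∂ν = 0
  integral_snd : ∫ C, C.2 ∂ν = 0

/-- The quadratic form `d ↦ ∫ cross d C ^ 2 ∂ν(C)`, written through the second moments of `ν`. -/
noncomputable def momentForm (ν : Measure (ℝ × ℝ)) (d : ℝ × ℝ) : ℝ :=
  d.1 ^ 2 * ∫ C, C.2 ^ 2 ∂ν - 2 * d.1 * d.2 * ∫ C, C.1 * C.2 ∂ν + d.2 ^ 2 * ∫ C, C.1 ^ 2 ∂ν

noncomputable def momentDet (ν : Measure (ℝ × ℝ)) : ℝ :=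
  (∫ C, C.1 ^ 2 ∂ν) * (∫ C, C.2 ^ 2 ∂ν) - (∫ C, C.1 * C.2 ∂ν) ^ 2

namespace IsCenteredL2

variable {ν : Measure (ℝ × ℝ)} [IsProbabilityMeasure ν]

theorem integral_quadratic (hν : IsCenteredL2 ν) {f : ℝ × ℝ → ℝ} (a b c p q r : ℝ)
    (hf : ∀ C, f C = a + b * C.1 + c * C.2 + p * C.1 ^ 2 + q * (C.1 * C.2) + r * C.2 ^ 2) :
    ∫ C, f C ∂ν = a + p * ∫ C, C.1 ^ 2 ∂ν + q * ∫ C, C.1 * C.2 ∂ν + r * ∫ C, C.2 ^ 2 ∂ν := by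
  have hx : Integrable (fun C : ℝ × ℝ => C.1) ν := hν.memLp_fst.integrable one_le_two
  have hy : Integrable (fun C : ℝ × ℝ => C.2) ν := hν.memLp_snd.integrable one_le_two
  have hxx : Integrable (fun C : ℝ × ℝ => C.1 ^ 2) ν := hν.memLp_fst.integrable_sq
  have hyy : Integrable (fun C : ℝ × ℝ => C.2 ^ 2) ν := hν.memLp_snd.integrable_sq
  have hxy : Integrable (fun C : ℝ × ℝ => C.1 * C.2) ν :=
    hν.memLp_fst.integrable_mul hν.memLp_snd
  have h₁ := (integrable_const a).add (hx.const_mul b)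
  have h₂ := h₁.add (hy.const_mul c)
  have h₃ := h₂.add (hxx.const_mul p)
  have h₄ := h₃.add (hxy.const_mul q)
  simp_rw [hf]
  rw [integral_add (by exact h₄) (hyy.const_mul r), integral_add (by exact h₃) (hxy.const_mul q),
    integral_add (by exact h₂) (hxx.const_mul p), integral_add (by exact h₁) (hy.const_mul c),
    integral_add (integrable_const a) (hx.const_mul b), integral_const, integral_const_mul,
    integral_const_mul, integral_const_mul, integral_const_mul, integral_const_mul,
    hν.integral_fst, hν.integral_snd]
  simp

theorem integral_cross_sub_sub_sq (hν : IsCenteredL2 ν) (A B : ℝ × ℝ) :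
    ∫ C, cross (A - C) (B - C) ^ 2 ∂ν = cross A B ^ 2 + momentForm ν (A - B) := by
  rw [hν.integral_quadratic (cross A B ^ 2) (2 * cross A B * (A.2 - B.2))
    (-2 * cross A B * (A.1 - B.1)) ((A.2 - B.2) ^ 2) (-2 * (A.1 - B.1) * (A.2 - B.2))
    ((A.1 - B.1) ^ 2) fun C => by simp only [cross, Prod.fst_sub, Prod.snd_sub]; ring]
  simp only [momentForm, Prod.fst_sub, Prod.snd_sub]
  ring

theorem integral_cross_sq_add_momentForm_sub (hν : IsCenteredL2 ν) (A : ℝ × ℝ) :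
    ∫ B, (cross A B ^ 2 + momentForm ν (A - B)) ∂ν = 2 * momentForm ν A + 2 * momentDet ν := by
  set X := ∫ C, C.1 ^ 2 ∂ν
  set M := ∫ C, C.1 * C.2 ∂ν
  set Y := ∫ C, C.2 ^ 2 ∂ν
  rw [hν.integral_quadratic (momentForm ν A) (2 * (M * A.2 - Y * A.1)) (2 * (M * A.1 - X * A.2))
    (Y + A.2 ^ 2) (-2 * M - 2 * A.1 * A.2) (X + A.1 ^ 2)
    fun B => by simp only [cross, momentForm, Prod.fst_sub, Prod.snd_sub]; ring, momentDet,
    momentForm]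
  ring

theorem integral_integral_integral_cross_sq (hν : IsCenteredL2 ν) :
    ∫ A, ∫ B, ∫ C, cross (A - C) (B - C) ^ 2 ∂ν ∂ν ∂ν = 6 * momentDet ν := by
  simp_rw [hν.integral_cross_sub_sub_sq, hν.integral_cross_sq_add_momentForm_sub]
  rw [hν.integral_quadratic (2 * momentDet ν) 0 0 (2 * ∫ C, C.2 ^ 2 ∂ν)
    (-4 * ∫ C, C.1 * C.2 ∂ν) (2 * ∫ C, C.1 ^ 2 ∂ν) fun A => by simp only [momentForm]; ring,
    momentDet]
  ring

end IsCenteredL2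

theorem MeasurableEquiv.subRight_apply {G : Type*} [MeasurableSpace G] [AddGroup G]
    [MeasurableAdd G] (c x : G) : MeasurableEquiv.subRight c x = x - c :=
  rfl

theorem integral_integral_integral_cross_sq_map_subRight (μ : Measure (ℝ × ℝ)) (c : ℝ × ℝ) :
    ∫ A, ∫ B, ∫ C, cross (A - C) (B - C) ^ 2 ∂μ.map (MeasurableEquiv.subRight c)
      ∂μ.map (MeasurableEquiv.subRight c) ∂μ.map (MeasurableEquiv.subRight c)
      = ∫ A, ∫ B, ∫ C, cross (A - C) (B - C) ^ 2 ∂μ ∂μ ∂μ := by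
  simp only [integral_map_equiv, MeasurableEquiv.subRight_apply, sub_sub_sub_cancel_right]

theorem Continuous.memLp_two_restrict_of_isBounded {X : Type*} [MetricSpace X] [ProperSpace X]
    [MeasurableSpace X] [OpensMeasurableSpace X] {μ : Measure X} [IsFiniteMeasureOnCompacts μ]
    {S : Set X} (hS : Bornology.IsBounded S) {f : X → ℝ} (hf : Continuous f) :
    MemLp f 2 (μ.restrict S) :=
  (memLp_two_iff_integrable_sq hf.aestronglyMeasurable).2 <|
    ((hf.pow 2).continuousOn.integrableOn_compact hS.isCompact_closure).mono_set subset_closure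

theorem xc_eq_setAverage (S : Set (ℝ × ℝ)) : xc S = ⨍ P in S, P.1 := by
  simp [xc, setAverage_eq, geomMoment, div_eq_inv_mul]

theorem yc_eq_setAverage (S : Set (ℝ × ℝ)) : yc S = ⨍ P in S, P.2 := by
  simp [yc, setAverage_eq, geomMoment, div_eq_inv_mul]

theorem isCenteredL2_map_sub_centroid {S : Set (ℝ × ℝ)} (hbdd : Bornology.IsBounded S) :
    IsCenteredL2 ((volume.restrict S).map (MeasurableEquiv.subRight (xc S, yc S))) := by
  have : IsFiniteMeasure (volume.restrict S) := isFiniteMeasure_restrict.2 hbdd.measure_lt_top.ne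
  refine ⟨?_, ?_, ?_, ?_⟩
  · exact (MeasurableEquiv.memLp_map_measure_iff _).2
      ((continuous_fst.sub continuous_const).memLp_two_restrict_of_isBounded hbdd)
  · exact (MeasurableEquiv.memLp_map_measure_iff _).2
      ((continuous_snd.sub continuous_const).memLp_two_restrict_of_isBounded hbdd)
  · simp [integral_map_equiv, MeasurableEquiv.subRight_apply, xc_eq_setAverage, integral_sub_average]
  · simp [integral_map_equiv, MeasurableEquiv.subRight_apply, yc_eq_setAverage, integral_sub_average]

theorem momentDet_map_sub_centroid (S : Set (ℝ × ℝ)) :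
    momentDet ((volume.restrict S).map (MeasurableEquiv.subRight (xc S, yc S)))
      = centralMoment 2 0 S * centralMoment 0 2 S - centralMoment 1 1 S ^ 2 := by
  simp [momentDet, centralMoment, integral_map_equiv, MeasurableEquiv.subRight_apply]

theorem mu_eq_centralMoment {S : Set (ℝ × ℝ)} (harea : volume S = 1) (p q : ℕ) :
    mu p q S = centralMoment p q S := by
  simp [mu, geomMoment, Measure.real, harea]

theorem stmt_0_general (S : Set (ℝ × ℝ))
    (hbdd : Bornology.IsBounded S) (harea : volume S = 1) :
    (1 / 6 : ℝ) *
      (∫ A in S, ∫ B in S, ∫ C in S,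
        (1 / 4 : ℝ) *
          ((A.1 - C.1) * (B.2 - C.2) - (A.2 - C.2) * (B.1 - C.1)) ^ 2)
    = (1 / 4 : ℝ) * (mu 2 0 S * mu 0 2 S - mu 1 1 S ^ 2) := by
  have : IsProbabilityMeasure (volume.restrict S) := ⟨by simp [harea]⟩
  have : IsProbabilityMeasure ((volume.restrict S).map (MeasurableEquiv.subRight (xc S, yc S))) :=
    Measure.isProbabilityMeasure_map (MeasurableEquiv.measurable _).aemeasurable
  have h := (isCenteredL2_map_sub_centroid hbdd).integral_integral_integral_cross_sq
  rw [integral_integral_integral_cross_sq_map_subRight, momentDet_map_sub_centroid] at h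
  simp only [cross, Prod.fst_sub, Prod.snd_sub] at h
  simp_rw [integral_const_mul, mu_eq_centralMoment harea]
  rw [h]
  ring

/-- For a bounded measurable `S ⊆ ℝ²` of area 1, one sixth of the
integral over triples `A, B, C ∈ S` of the squared area of triangle `ABC`
equals one quarter of `𝒜(S)`. -/
theorem stmt_0 (S : Set (ℝ × ℝ)) (hmeas : MeasurableSet S)
    (hbdd : Bornology.IsBounded S) (harea : volume S = 1) :
    (1 / 6 : ℝ) *
      (∫ A in S, ∫ B in S, ∫ C in S,
        (1 / 4 : ℝ) *
          ((A.1 - C.1) * (B.2 - C.2) - (A.2 - C.2) * (B.1 - C.1)) ^ 2)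
    = (1 / 4 : ℝ) * (mu 2 0 S * mu 0 2 S - mu 1 1 S ^ 2) :=
  stmt_0_general S hbdd harea
end

section
/- Let S be a bounded measurable subset of ℝ² with positive area. Denote by M_{p,q}(S) = ∫∫_S (x−x_c(S))^p (y−y_c(S))^q dx dy the (un-normalized) central moments. Then ∫∫_{(x,y)∈S} ∫∫_{(u,v)∈S} ∫∫_{(z,ω)∈S} ((x−z)(v−ω) − (y−ω)(u−z))² dx dy du dv dz dω = 6·m_{0,0}(S)·(M₂₀(S)·M₀₂(S) − M₁₁(S)²). -/
/-! The integrand depends only on differences of points, so measure everything from the centroid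
`c`. With `a, b, d := A - c, B - c, C - c` the determinant is `a × b + (b - a) × d`, affine in `d`.
Integrating a quadratic polynomial in `P - c` only sees its constant term and its second-order
coefficients, because the first moments about the centroid vanish. Integrating out `C`, `B`, `A` in
turn gives `m (a × b)² + Q (b - a)`, then `2 (m Q a + Δ)`, then `6 m Δ`, where
`Q w = ∫ (w × (P - c))²` and `Δ = M₂₀ M₀₂ - M₁₁²`. -/

open MeasureTheory Set

noncomputable def momentAbout (μ : Measure (ℝ × ℝ)) (c : ℝ × ℝ) (p q : ℕ) : ℝ :=
  ∫ P, (P.1 - c.1) ^ p * (P.2 - c.2) ^ q ∂μ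

/-- The quadratic form `w ↦ ∫ (w.1 (P.2 - c.2) - w.2 (P.1 - c.1))² dμ(P)`, written through the
second moments about `c`. -/
noncomputable def crossMomentForm (μ : Measure (ℝ × ℝ)) (c w : ℝ × ℝ) : ℝ :=
  w.2 ^ 2 * momentAbout μ c 2 0 - 2 * w.1 * w.2 * momentAbout μ c 1 1
    + w.1 ^ 2 * momentAbout μ c 0 2

section Centered

variable {μ : Measure (ℝ × ℝ)} [IsFiniteMeasure μ] {c : ℝ × ℝ}

theorem integral_quadratic_of_centered
    (hx : MemLp Prod.fst 2 μ) (hy : MemLp Prod.snd 2 μ)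
    (hc₁ : ∫ P, (P.1 - c.1) ∂μ = 0) (hc₂ : ∫ P, (P.2 - c.2) ∂μ = 0) (α β γ δ ε ζ : ℝ) :
    ∫ P, (α + β * (P.1 - c.1) + γ * (P.2 - c.2) + δ * (P.1 - c.1) ^ 2
        + ε * ((P.1 - c.1) * (P.2 - c.2)) + ζ * (P.2 - c.2) ^ 2) ∂μ
      = α * μ.real univ + δ * momentAbout μ c 2 0 + ε * momentAbout μ c 1 1
        + ζ * momentAbout μ c 0 2 := by
  have hx' : MemLp (fun P : ℝ × ℝ => P.1 - c.1) 2 μ := hx.sub (memLp_const c.1)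
  have hy' : MemLp (fun P : ℝ × ℝ => P.2 - c.2) 2 μ := hy.sub (memLp_const c.2)
  have ix := (hx'.integrable one_le_two).const_mul β
  have iy := (hy'.integrable one_le_two).const_mul γ
  have ixx := (hx'.integrable_mul hx').const_mul δ
  have ixy := (hx'.integrable_mul hy').const_mul ε
  have iyy := (hy'.integrable_mul hy').const_mul ζ
  simp only [Pi.mul_apply, ← sq] at ixx iyy ixy
  rw [integral_add _ iyy, integral_add _ ixy, integral_add _ ixx, integral_add _ iy,
    integral_add (integrable_const α) ix]
  · simp only [integral_const, smul_eq_mul, integral_const_mul, hc₁, hc₂, momentAbout, pow_zero,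
      pow_one, mul_one, one_mul]
    ring
  all_goals fun_prop

theorem integral_cross_sq_of_centered
    (hx : MemLp Prod.fst 2 μ) (hy : MemLp Prod.snd 2 μ)
    (hc₁ : ∫ P, (P.1 - c.1) ∂μ = 0) (hc₂ : ∫ P, (P.2 - c.2) ∂μ = 0) (A B : ℝ × ℝ) :
    ∫ C, ((A.1 - C.1) * (B.2 - C.2) - (A.2 - C.2) * (B.1 - C.1)) ^ 2 ∂μ
      = μ.real univ * ((A.1 - c.1) * (B.2 - c.2) - (A.2 - c.2) * (B.1 - c.1)) ^ 2
        + crossMomentForm μ c (B - A) := by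
  set k := (A.1 - c.1) * (B.2 - c.2) - (A.2 - c.2) * (B.1 - c.1)
  set w := B - A
  convert integral_quadratic_of_centered hx hy hc₁ hc₂ (k ^ 2) (-2 * k * w.2) (2 * k * w.1)
    (w.2 ^ 2) (-2 * w.1 * w.2) (w.1 ^ 2) using 1
  · congr 1; funext C; simp only [k, w, Prod.fst_sub, Prod.snd_sub]; ring
  · rw [crossMomentForm]; ring

theorem integral_integral_cross_sq_of_centered
    (hx : MemLp Prod.fst 2 μ) (hy : MemLp Prod.snd 2 μ)
    (hc₁ : ∫ P, (P.1 - c.1) ∂μ = 0) (hc₂ : ∫ P, (P.2 - c.2) ∂μ = 0) (A : ℝ × ℝ) :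
    ∫ B, ∫ C, ((A.1 - C.1) * (B.2 - C.2) - (A.2 - C.2) * (B.1 - C.1)) ^ 2 ∂μ ∂μ
      = 2 * (μ.real univ * crossMomentForm μ c (A - c)
        + (momentAbout μ c 2 0 * momentAbout μ c 0 2 - momentAbout μ c 1 1 ^ 2)) := by
  simp_rw [integral_cross_sq_of_centered hx hy hc₁ hc₂ A]
  set m := μ.real univ
  set a := A - c
  convert integral_quadratic_of_centered hx hy hc₁ hc₂ (crossMomentForm μ c a)
    (2 * a.2 * momentAbout μ c 1 1 - 2 * a.1 * momentAbout μ c 0 2)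
    (2 * a.1 * momentAbout μ c 1 1 - 2 * a.2 * momentAbout μ c 2 0)
    (m * a.2 ^ 2 + momentAbout μ c 0 2) (-2 * m * a.1 * a.2 - 2 * momentAbout μ c 1 1)
    (m * a.1 ^ 2 + momentAbout μ c 2 0) using 1
  · congr 1; funext B; simp only [a, crossMomentForm, Prod.fst_sub, Prod.snd_sub]; ring
  · rw [crossMomentForm]; ring

theorem integral_integral_integral_cross_sq_of_centered
    (hx : MemLp Prod.fst 2 μ) (hy : MemLp Prod.snd 2 μ)
    (hc₁ : ∫ P, (P.1 - c.1) ∂μ = 0) (hc₂ : ∫ P, (P.2 - c.2) ∂μ = 0) :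
    ∫ A, ∫ B, ∫ C, ((A.1 - C.1) * (B.2 - C.2) - (A.2 - C.2) * (B.1 - C.1)) ^ 2 ∂μ ∂μ ∂μ
      = 6 * μ.real univ *
        (momentAbout μ c 2 0 * momentAbout μ c 0 2 - momentAbout μ c 1 1 ^ 2) := by
  simp_rw [integral_integral_cross_sq_of_centered hx hy hc₁ hc₂]
  set m := μ.real univ
  convert integral_quadratic_of_centered hx hy hc₁ hc₂
    (2 * (momentAbout μ c 2 0 * momentAbout μ c 0 2 - momentAbout μ c 1 1 ^ 2)) 0 0
    (2 * m * momentAbout μ c 0 2) (-4 * m * momentAbout μ c 1 1)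
    (2 * m * momentAbout μ c 2 0) using 1
  · congr 1; funext A; simp only [crossMomentForm, Prod.fst_sub, Prod.snd_sub]; ring
  · ring

end Centered

theorem geomMoment_zero_zero (S : Set (ℝ × ℝ)) : geomMoment 0 0 S = volume.real S := by
  simp [geomMoment]

theorem stmt_1_general (S : Set (ℝ × ℝ))
    (hbdd : Bornology.IsBounded S) :
    (∫ A in S, ∫ B in S, ∫ C in S,
        ((A.1 - C.1) * (B.2 - C.2) - (A.2 - C.2) * (B.1 - C.1)) ^ 2)
    = 6 * geomMoment 0 0 S *
        (centralMoment 2 0 S * centralMoment 0 2 S - centralMoment 1 1 S ^ 2) := by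
  have : IsFiniteMeasure (volume.restrict S) := isFiniteMeasure_restrict.2 hbdd.measure_lt_top.ne
  have hL2 : ∀ f : ℝ × ℝ → ℝ, Continuous f → MemLp f 2 (volume.restrict S) := fun f hf =>
    (memLp_two_iff_integrable_sq hf.aestronglyMeasurable).2 <|
      ((hf.pow 2).continuousOn.integrableOn_compact hbdd.isCompact_closure).mono_set subset_closure
  rw [geomMoment_zero_zero, ← measureReal_restrict_apply_univ]
  exact integral_integral_integral_cross_sq_of_centered (c := (xc S, yc S))
    (hL2 _ continuous_fst) (hL2 _ continuous_snd)
    (by rw [xc_eq_setAverage]; exact integral_sub_average _ _)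
    (by rw [yc_eq_setAverage]; exact integral_sub_average _ _)

/-- For a bounded measurable `S ⊆ ℝ²` of positive area, the triple
integral of the squared determinant equals `6·m₀₀(S)·(M₂₀(S)·M₀₂(S) − M₁₁(S)²)`. -/
theorem stmt_1 (S : Set (ℝ × ℝ)) (hmeas : MeasurableSet S)
    (hbdd : Bornology.IsBounded S) (hpos : 0 < (volume S).toReal) :
    (∫ A in S, ∫ B in S, ∫ C in S,
        ((A.1 - C.1) * (B.2 - C.2) - (A.2 - C.2) * (B.1 - C.1)) ^ 2)
    = 6 * geomMoment 0 0 S *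
        (centralMoment 2 0 S * centralMoment 0 2 S - centralMoment 1 1 S ^ 2) :=
  stmt_1_general S hbdd
end

section
/- The quantity 𝒜(S) = μ₂₀(S)·μ₀₂(S) − μ₁₁(S)² is an affine invariant: let S be a bounded measurable subset of ℝ² with positive area, let L be an invertible 2×2 real matrix, let b ∈ ℝ², and let T(P) = L·P + b. Then 𝒜(T(S)) = 𝒜(S). -/
open MeasureTheory Set

/-!
Under `T P = L P + b` areas scale by `|det L|` and the centroid is carried along by `T`, so
the centred coordinates transform linearly by `L`. Hence the matrix `M` of second central
moments becomes `|det L| • L M Lᵀ`. As `𝒜 = det M / m₀₀⁴`, numerator and denominator both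
acquire the factor `(det L)⁴`.
-/

open scoped Matrix

theorem integral_image_linearMap_add_const {E F : Type*} [NormedAddCommGroup E]
    [NormedSpace ℝ E] [FiniteDimensional ℝ E] [MeasurableSpace E] [BorelSpace E]
    [NormedAddCommGroup F] [NormedSpace ℝ F] (μ : Measure E) [Measure.IsAddHaarMeasure μ]
    {S : Set E} (hS : MeasurableSet S) {A : E →ₗ[ℝ] E} (hA : A.det ≠ 0) (b : E) (g : E → F) :
    ∫ x in (fun x => A x + b) '' S, g x ∂μ = |A.det| • ∫ x in S, g (A x + b) ∂μ := by
  have hA' : Function.Injective A :=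
    ((Module.End.isUnit_iff A).1 (A.isUnit_iff_isUnit_det.2 hA.isUnit)).injective
  have hderiv : ∀ x ∈ S, HasFDerivWithinAt (fun x => A x + b) A.toContinuousLinearMap S x :=
    fun x _ => (A.toContinuousLinearMap.hasFDerivAt.add_const b).hasFDerivWithinAt
  rw [integral_image_eq_integral_abs_det_fderiv_smul μ hS hderiv
    ((add_left_injective b).comp hA').injOn, integral_smul]
  rfl

theorem Continuous.integrableOn_of_isBounded {X E : Type*} [MetricSpace X] [ProperSpace X]
    [MeasurableSpace X] [OpensMeasurableSpace X] {μ : Measure X} [IsFiniteMeasureOnCompacts μ]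
    [NormedAddCommGroup E] {f : X → E} (hf : Continuous f) {S : Set X}
    (hS : Bornology.IsBounded S) : IntegrableOn f S μ :=
  (hf.continuousOn.integrableOn_compact hS.isCompact_closure).mono_set subset_closure

theorem integral_mulVec_mul_mulVec {α ι : Type*} [MeasurableSpace α] {μ : Measure α} [Fintype ι]
    {d : α → ι → ℝ} (hd : ∀ k l, Integrable (fun x => d x k * d x l) μ) (L : Matrix ι ι ℝ)
    (i j : ι) :
    ∫ x, (L *ᵥ d x) i * (L *ᵥ d x) j ∂μ =
      (L * Matrix.of (fun k l => ∫ x, d x k * d x l ∂μ) * Lᵀ) i j := by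
  have hexpand : ∀ x, (L *ᵥ d x) i * (L *ᵥ d x) j =
      ∑ k, ∑ l, L i k * L j l * (d x k * d x l) := fun x => by
    simp only [Matrix.mulVec, dotProduct, Finset.sum_mul_sum]
    exact Finset.sum_congr rfl fun k _ => Finset.sum_congr rfl fun l _ => by ring
  simp_rw [hexpand]
  rw [integral_finsetSum _ fun k _ => integrable_finsetSum _ fun l _ => (hd k l).const_mul _]
  simp_rw [integral_finsetSum _ fun l _ => (hd _ l).const_mul _, integral_const_mul]
  simp only [Matrix.mul_apply, Matrix.transpose_apply, Matrix.of_apply, Finset.sum_mul]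
  rw [Finset.sum_comm]
  exact Finset.sum_congr rfl fun k _ => Finset.sum_congr rfl fun l _ => by ring

def matrixAffine (L : Matrix (Fin 2) (Fin 2) ℝ) (b : ℝ × ℝ) (P : ℝ × ℝ) : ℝ × ℝ :=
  (L 0 0 * P.1 + L 0 1 * P.2 + b.1, L 1 0 * P.1 + L 1 1 * P.2 + b.2)

theorem matrixAffine_eq (L : Matrix (Fin 2) (Fin 2) ℝ) (b : ℝ × ℝ) :
    matrixAffine L b =
      fun P => Matrix.toLin (Module.Basis.finTwoProd ℝ) (Module.Basis.finTwoProd ℝ) L P + b := by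
  conv_rhs => rw [Matrix.eta_fin_two L]
  ext P <;> simp [matrixAffine, Matrix.toLin_finTwoProd_apply]

section Planar

variable {S : Set (ℝ × ℝ)} {L : Matrix (Fin 2) (Fin 2) ℝ}

theorem integral_image_matrixAffine (hS : MeasurableSet S) (hL : L.det ≠ 0) (b : ℝ × ℝ)
    (g : ℝ × ℝ → ℝ) :
    ∫ P in matrixAffine L b '' S, g P = |L.det| * ∫ P in S, g (matrixAffine L b P) := by
  rw [matrixAffine_eq,
    integral_image_linearMap_add_const volume hS (by rwa [LinearMap.det_toLin]),
    LinearMap.det_toLin, smul_eq_mul]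

theorem geomMoment_zero_zero_image (hS : MeasurableSet S) (hL : L.det ≠ 0) (b : ℝ × ℝ) :
    geomMoment 0 0 (matrixAffine L b '' S) = |L.det| * geomMoment 0 0 S := by
  simp only [geomMoment, integral_image_matrixAffine hS hL, pow_zero]

theorem setIntegral_linear_add_const (hS : Bornology.IsBounded S) (a c e : ℝ) :
    ∫ P in S, (a * P.1 + c * P.2 + e) =
      a * geomMoment 1 0 S + c * geomMoment 0 1 S + e * geomMoment 0 0 S := by
  have h1 : IntegrableOn (fun P : ℝ × ℝ => a * P.1) S :=
    (continuous_const.mul continuous_fst).integrableOn_of_isBounded hS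
  have h2 : IntegrableOn (fun P : ℝ × ℝ => c * P.2) S :=
    (continuous_const.mul continuous_snd).integrableOn_of_isBounded hS
  have h12 : IntegrableOn (fun P : ℝ × ℝ => a * P.1 + c * P.2) S := h1.add h2
  rw [integral_add h12 (continuous_const.integrableOn_of_isBounded hS),
    integral_add h1 h2, integral_const_mul, integral_const_mul]
  simp [geomMoment, mul_comm e]

theorem xc_image (hS : MeasurableSet S) (hSb : Bornology.IsBounded S) (hL : L.det ≠ 0)
    (hm : geomMoment 0 0 S ≠ 0) (b : ℝ × ℝ) :
    xc (matrixAffine L b '' S) = L 0 0 * xc S + L 0 1 * yc S + b.1 := by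
  rw [xc, geomMoment_zero_zero_image hS hL, geomMoment, integral_image_matrixAffine hS hL]
  simp only [matrixAffine, pow_one, pow_zero, mul_one]
  rw [setIntegral_linear_add_const hSb, xc, yc]
  field_simp

theorem yc_image (hS : MeasurableSet S) (hSb : Bornology.IsBounded S) (hL : L.det ≠ 0)
    (hm : geomMoment 0 0 S ≠ 0) (b : ℝ × ℝ) :
    yc (matrixAffine L b '' S) = L 1 0 * xc S + L 1 1 * yc S + b.2 := by
  rw [yc, geomMoment_zero_zero_image hS hL, geomMoment, integral_image_matrixAffine hS hL]
  simp only [matrixAffine, pow_one, pow_zero, one_mul]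
  rw [setIntegral_linear_add_const hSb, xc, yc]
  field_simp

noncomputable def centralDisplacement (S : Set (ℝ × ℝ)) (P : ℝ × ℝ) : Fin 2 → ℝ :=
  ![P.1 - xc S, P.2 - yc S]

theorem continuous_centralDisplacement (S : Set (ℝ × ℝ)) : Continuous (centralDisplacement S) :=
  continuous_pi fun k => by fin_cases k <;> simp [centralDisplacement] <;> fun_prop

theorem centralDisplacement_image (hS : MeasurableSet S) (hSb : Bornology.IsBounded S)
    (hL : L.det ≠ 0) (hm : geomMoment 0 0 S ≠ 0) (b : ℝ × ℝ) (P : ℝ × ℝ) :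
    centralDisplacement (matrixAffine L b '' S) (matrixAffine L b P) =
      L *ᵥ centralDisplacement S P := by
  ext k
  fin_cases k <;>
  · simp only [Matrix.mulVec, dotProduct, Fin.sum_univ_two]
    simp [centralDisplacement, matrixAffine, xc_image hS hSb hL hm, yc_image hS hSb hL hm]
    ring

noncomputable def covMatrix (S : Set (ℝ × ℝ)) : Matrix (Fin 2) (Fin 2) ℝ :=
  Matrix.of fun k l => ∫ P in S, centralDisplacement S P k * centralDisplacement S P l

theorem covMatrix_image (hS : MeasurableSet S) (hSb : Bornology.IsBounded S) (hL : L.det ≠ 0)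
    (hm : geomMoment 0 0 S ≠ 0) (b : ℝ × ℝ) :
    covMatrix (matrixAffine L b '' S) = |L.det| • (L * covMatrix S * Lᵀ) := by
  have hd := continuous_centralDisplacement S
  have hint : ∀ k l,
      IntegrableOn (fun P => centralDisplacement S P k * centralDisplacement S P l) S :=
    fun k l => Continuous.integrableOn_of_isBounded (by fun_prop) hSb
  ext i j
  rw [covMatrix, Matrix.of_apply, integral_image_matrixAffine hS hL]
  simp_rw [centralDisplacement_image hS hSb hL hm]
  rw [integral_mulVec_mul_mulVec hint]
  rfl

theorem mu_of_add_eq_two {p q : ℕ} (h : p + q = 2) (S : Set (ℝ × ℝ)) :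
    mu p q S = centralMoment p q S / geomMoment 0 0 S ^ 2 := by
  have h' : ((p : ℝ) + q + 2) / 2 = 2 := by
    rw [show (p : ℝ) + q = 2 by exact_mod_cast h]
    norm_num
  rw [mu, h', Real.rpow_two]

theorem affInv_eq_det_covMatrix_div (S : Set (ℝ × ℝ)) :
    affInv S = (covMatrix S).det / geomMoment 0 0 S ^ 4 := by
  rw [affInv, mu_of_add_eq_two rfl, mu_of_add_eq_two rfl, mu_of_add_eq_two rfl,
    Matrix.det_fin_two]
  simp only [covMatrix, centralMoment, centralDisplacement, Matrix.of_apply, Matrix.cons_val_zero,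
    Matrix.cons_val_one, pow_zero, pow_one, mul_one, one_mul]
  simp only [mul_comm (_ - yc S) (_ - xc S), ← sq]
  ring

end Planar

/-- `𝒜(S)` is an affine invariant: for `T(P) = L·P + b` with `L`
an invertible 2×2 real matrix, `𝒜(T(S)) = 𝒜(S)`. -/
theorem stmt_7 (S : Set (ℝ × ℝ)) (hmeas : MeasurableSet S)
    (hbdd : Bornology.IsBounded S) (hpos : 0 < (volume S).toReal)
    (L : Matrix (Fin 2) (Fin 2) ℝ) (hL : L.det ≠ 0) (b : ℝ × ℝ)
    (T : ℝ × ℝ → ℝ × ℝ)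
    (hT : ∀ P, T P = (L 0 0 * P.1 + L 0 1 * P.2 + b.1,
                      L 1 0 * P.1 + L 1 1 * P.2 + b.2)) :
    affInv (T '' S) = affInv S := by
  obtain rfl : T = matrixAffine L b := funext hT
  have hm : geomMoment 0 0 S ≠ 0 := by
    simpa [geomMoment, Measure.real] using hpos.ne'
  have hdet : |L.det| ≠ 0 := abs_ne_zero.2 hL
  rw [affInv_eq_det_covMatrix_div, affInv_eq_det_covMatrix_div,
    covMatrix_image hmeas hbdd hL hm, geomMoment_zero_zero_image hmeas hL, Matrix.det_smul,
    Matrix.det_mul, Matrix.det_mul, Matrix.det_transpose, Fintype.card_fin]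
  field_simp
  rw [sq_abs]
end
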